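/- For any two positive semidefinite Hermitian matrices A and B of the same size, and for every index j, the j-th largest eigenvalue of AB satisfies λ_j(AB) ≥ λ_min(B) · λ_j(A). -/

import Mathlib

/-!
Write `S = √B` and `c = λ_min(B)`, so that `‖S x‖² = ⟪x, B x⟫ ≥ c ‖x‖²`. If `c = 0` the claim is
that `S A S` is positive semidefinite. If `c > 0`, then `S` is invertible and the preimage under `S`
of the span `V` of the top `j + 1` eigenvectors of `A` has dimension `j + 1`; on it
`⟪x, S A S x⟫ = ⟪S x, A S x⟫ ≥ λ_j(A) ‖S x‖² ≥ c λ_j(A) ‖x‖²`, and the min-max principle gives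
`λ_j(S A S) ≥ c λ_j(A)`.
-/

open Matrix
open scoped ComplexOrder

/-- The square root of a positive semidefinite matrix, as defined in Mathlib (Dec 2024). -/
noncomputable def Matrix.PosSemidef.sqrt {m : Type*} [Fintype m] [DecidableEq m] {𝕜 : Type*}
    [RCLike 𝕜] {A : Matrix m m 𝕜} (hA : A.PosSemidef) : Matrix m m 𝕜 :=
  hA.1.eigenvectorUnitary.1 * diagonal ((↑) ∘ (Real.sqrt ∘ hA.1.eigenvalues)) *
  (star hA.1.eigenvectorUnitary : Matrix m m 𝕜)

/-- The `j`-th largest eigenvalue of a Hermitian matrix (eigenvalues sorted decreasingly). -/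
noncomputable def eigDesc {n : ℕ} {A : Matrix (Fin n) (Fin n) ℂ} (hA : A.IsHermitian) :
    Fin n → ℝ :=
  fun j => (hA.eigenvalues ∘ ⇑(Tuple.sort hA.eigenvalues)) j.rev

open scoped InnerProductSpace

section Eigenbasis

variable {𝕜 E ι : Type*} [RCLike 𝕜] [NormedAddCommGroup E] [InnerProductSpace 𝕜 E]

theorem Orthonormal.inner_eq_zero_of_mem_span_image {v : ι → E} (hv : Orthonormal 𝕜 v)
    {S : Set ι} {i : ι} (hi : i ∉ S) {x : E} (hx : x ∈ Submodule.span 𝕜 (v '' S)) :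
    ⟪v i, x⟫_𝕜 = 0 := by
  rw [← Submodule.mem_orthogonal_singleton_iff_inner_right]
  refine Submodule.span_le.2 ?_ hx
  rintro _ ⟨k, hk, rfl⟩
  exact Submodule.mem_orthogonal_singleton_iff_inner_right.2
    (hv.2 (ne_of_mem_of_not_mem hk hi).symm)

variable [Fintype ι]

theorem OrthonormalBasis.finrank_span_image (b : OrthonormalBasis ι 𝕜 E) (S : Finset ι) :
    Module.finrank 𝕜 (Submodule.span 𝕜 (b '' S)) = S.card := by
  rw [Set.image_eq_range]
  exact (finrank_span_eq_card (b.orthonormal.linearIndependent.comp _ Subtype.val_injective)).trans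
    (Fintype.card_coe S)

variable {T : E →ₗ[𝕜] E} {b : OrthonormalBasis ι 𝕜 E} {μ : ι → ℝ}

theorem re_inner_map_self_eq_sum (hb : ∀ i, T (b i) = (μ i : 𝕜) • b i) (x : E) :
    RCLike.re ⟪x, T x⟫_𝕜 = ∑ i, μ i * ‖⟪b i, x⟫_𝕜‖ ^ 2 := by
  have hTx : T x = ∑ i, (⟪b i, x⟫_𝕜 * μ i) • b i := by
    conv_lhs => rw [← b.sum_repr' x]
    simp only [map_sum, map_smul, hb, smul_smul]
  rw [hTx, inner_sum, map_sum]
  refine Finset.sum_congr rfl fun i _ => ?_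
  rw [inner_smul_right, ← inner_conj_symm x (b i), mul_right_comm, RCLike.mul_conj, mul_comm,
    ← RCLike.ofReal_pow, ← RCLike.ofReal_mul, RCLike.ofReal_re]

theorem mul_norm_sq_le_re_inner_map_self (hb : ∀ i, T (b i) = (μ i : 𝕜) • b i) {S : Set ι}
    {t : ℝ} (ht : ∀ i ∈ S, t ≤ μ i) {x : E} (hx : x ∈ Submodule.span 𝕜 (b '' S)) :
    t * ‖x‖ ^ 2 ≤ RCLike.re ⟪x, T x⟫_𝕜 := by
  rw [re_inner_map_self_eq_sum hb, ← b.sum_sq_norm_inner_right, Finset.mul_sum]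
  refine Finset.sum_le_sum fun i _ => ?_
  by_cases hi : i ∈ S
  · exact mul_le_mul_of_nonneg_right (ht i hi) (sq_nonneg _)
  · simp [b.orthonormal.inner_eq_zero_of_mem_span_image hi hx]

theorem re_inner_map_self_le_mul_norm_sq (hb : ∀ i, T (b i) = (μ i : 𝕜) • b i) {S : Set ι}
    {t : ℝ} (ht : ∀ i ∈ S, μ i ≤ t) {x : E} (hx : x ∈ Submodule.span 𝕜 (b '' S)) :
    RCLike.re ⟪x, T x⟫_𝕜 ≤ t * ‖x‖ ^ 2 := by
  rw [re_inner_map_self_eq_sum hb, ← b.sum_sq_norm_inner_right, Finset.mul_sum]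
  refine Finset.sum_le_sum fun i _ => ?_
  by_cases hi : i ∈ S
  · exact mul_le_mul_of_nonneg_right (ht i hi) (sq_nonneg _)
  · simp [b.orthonormal.inner_eq_zero_of_mem_span_image hi hx]

theorem iInf_mul_norm_sq_le_re_inner_map_self (hb : ∀ i, T (b i) = (μ i : 𝕜) • b i) (x : E) :
    (⨅ i, μ i) * ‖x‖ ^ 2 ≤ RCLike.re ⟪x, T x⟫_𝕜 := by
  refine mul_norm_sq_le_re_inner_map_self hb (S := Set.univ)
    (fun i _ => ciInf_le (Set.finite_range μ).bddBelow i) ?_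
  rw [Set.image_univ, ← b.coe_toBasis, b.toBasis.span_eq]
  trivial

end Eigenbasis

namespace Matrix

variable {𝕜 m : Type*} [RCLike 𝕜] [Fintype m] [DecidableEq m]

theorem PosSemidef.sqrt_eq_cfc {A : Matrix m m 𝕜} (hA : A.PosSemidef) :
    hA.sqrt = cfc Real.sqrt A := by
  rw [hA.1.cfc_eq]
  rfl

theorem PosSemidef.isHermitian_sqrt {A : Matrix m m 𝕜} (hA : A.PosSemidef) :
    hA.sqrt.IsHermitian := by
  rw [hA.sqrt_eq_cfc]
  exact cfc_predicate _ _

theorem PosSemidef.sqrt_mul_sqrt {A : Matrix m m 𝕜} (hA : A.PosSemidef) :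
    hA.sqrt * hA.sqrt = A := by
  rw [hA.sqrt_eq_cfc, ← cfc_mul ..]
  conv_rhs => rw [← cfc_id' ℝ A hA.1]
  refine cfc_congr fun x hx => Real.mul_self_sqrt ?_
  rw [hA.1.spectrum_real_eq_range_eigenvalues] at hx
  obtain ⟨i, rfl⟩ := hx
  exact hA.eigenvalues_nonneg i

theorem IsHermitian.toEuclideanLin_eigenvectorBasis {M : Matrix m m 𝕜} (hM : M.IsHermitian)
    (i : m) :
    toEuclideanLin M (hM.eigenvectorBasis i) = (hM.eigenvalues i : 𝕜) • hM.eigenvectorBasis i := by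
  simpa [toLpLin_apply] using congrArg (WithLp.toLp 2) (hM.mulVec_eigenvectorBasis i)

theorem IsHermitian.inner_toEuclideanLin_mul_mul_self {S : Matrix m m 𝕜} (hS : S.IsHermitian)
    (A : Matrix m m 𝕜) (x : EuclideanSpace 𝕜 m) :
    ⟪x, toEuclideanLin (S * A * S) x⟫_𝕜 =
      ⟪toEuclideanLin S x, toEuclideanLin A (toEuclideanLin S x)⟫_𝕜 := by
  simp only [toLpLin_mul_same, LinearMap.comp_apply]
  exact (isSymmetric_toEuclideanLin_iff.2 hS _ _).symm

theorem PosSemidef.norm_sq_toEuclideanLin_sqrt {A : Matrix m m 𝕜} (hA : A.PosSemidef)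
    (x : EuclideanSpace 𝕜 m) :
    ‖toEuclideanLin hA.sqrt x‖ ^ 2 = RCLike.re ⟪x, toEuclideanLin A x⟫_𝕜 := by
  conv_rhs => rw [← hA.sqrt_mul_sqrt, toLpLin_mul_same, LinearMap.comp_apply,
    ← isSymmetric_toEuclideanLin_iff.2 hA.isHermitian_sqrt]
  exact (inner_self_eq_norm_sq _).symm

end Matrix

theorem Submodule.inf_ne_bot_of_finrank_lt_add {K V : Type*} [DivisionRing K] [AddCommGroup V]
    [Module K V] [FiniteDimensional K V] {U W : Submodule K V}
    (h : Module.finrank K V < Module.finrank K U + Module.finrank K W) : U ⊓ W ≠ ⊥ := by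
  intro hUW
  have hsum := Submodule.finrank_sup_add_finrank_inf_eq U W
  rw [hUW, finrank_bot, add_zero] at hsum
  have := Submodule.finrank_le (U ⊔ W)
  omega

namespace Matrix.IsHermitian

variable {n : ℕ} {M : Matrix (Fin n) (Fin n) ℂ} (hM : M.IsHermitian) (j : Fin n)

/- `Tuple.sort` sorts increasingly, so `eigDesc hM j` sits at sorted position `j.rev`; the `j + 1`
largest eigenvalues are those at positions `≥ j.rev`. -/
theorem exists_finrank_eq_eigDesc_mul_le :
    ∃ V : Submodule ℂ (EuclideanSpace ℂ (Fin n)), Module.finrank ℂ V = j + 1 ∧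
      ∀ x ∈ V, eigDesc hM j * ‖x‖ ^ 2 ≤ RCLike.re ⟪x, toEuclideanLin M x⟫_ℂ := by
  set σ := Tuple.sort hM.eigenvalues
  refine ⟨Submodule.span ℂ (hM.eigenvectorBasis '' ((Finset.Ici j.rev).image σ : Finset _)),
    ?_, fun x hx => mul_norm_sq_le_re_inner_map_self hM.toEuclideanLin_eigenvectorBasis ?_ hx⟩
  · rw [OrthonormalBasis.finrank_span_image, Finset.card_image_of_injective _ σ.injective,
      Fin.card_Ici, Fin.val_rev]
    omega
  · intro i hi
    obtain ⟨k, hk, rfl⟩ := Finset.mem_image.1 (Finset.mem_coe.1 hi)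
    exact Tuple.monotone_sort hM.eigenvalues (Finset.mem_Ici.1 hk)

theorem exists_finrank_eq_le_eigDesc_mul :
    ∃ W : Submodule ℂ (EuclideanSpace ℂ (Fin n)), Module.finrank ℂ W = n - j ∧
      ∀ x ∈ W, RCLike.re ⟪x, toEuclideanLin M x⟫_ℂ ≤ eigDesc hM j * ‖x‖ ^ 2 := by
  set σ := Tuple.sort hM.eigenvalues
  refine ⟨Submodule.span ℂ (hM.eigenvectorBasis '' ((Finset.Iic j.rev).image σ : Finset _)),
    ?_, fun x hx => re_inner_map_self_le_mul_norm_sq hM.toEuclideanLin_eigenvectorBasis ?_ hx⟩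
  · rw [OrthonormalBasis.finrank_span_image, Finset.card_image_of_injective _ σ.injective,
      Fin.card_Iic, Fin.val_rev]
    omega
  · intro i hi
    obtain ⟨k, hk, rfl⟩ := Finset.mem_image.1 (Finset.mem_coe.1 hi)
    exact Tuple.monotone_sort hM.eigenvalues (Finset.mem_Iic.1 hk)

theorem le_eigDesc_of_forall_mul_le (V : Submodule ℂ (EuclideanSpace ℂ (Fin n)))
    (hV : j + 1 ≤ Module.finrank ℂ V) {t : ℝ}
    (h : ∀ x ∈ V, t * ‖x‖ ^ 2 ≤ RCLike.re ⟪x, toEuclideanLin M x⟫_ℂ) : t ≤ eigDesc hM j := by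
  obtain ⟨W, hWdim, hW⟩ := hM.exists_finrank_eq_le_eigDesc_mul j
  have hVW : V ⊓ W ≠ ⊥ := Submodule.inf_ne_bot_of_finrank_lt_add (by
    rw [finrank_euclideanSpace_fin, hWdim]
    omega)
  obtain ⟨x, hx, hx0⟩ := Submodule.exists_mem_ne_zero_of_ne_bot hVW
  exact le_of_mul_le_mul_right ((h x hx.1).trans (hW x hx.2)) (by positivity)

end Matrix.IsHermitian

/-- For PSD Hermitian `A`, `B`, the `j`-th largest eigenvalue of `A * B`
(identified with the eigenvalues of the Hermitian matrix `√B * A * √B`, to which `A * B`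
is similar) satisfies `λ_j(AB) ≥ λ_min(B) * λ_j(A)`. -/
theorem eigMin_mul_le_eig_mul {n : ℕ} {A B : Matrix (Fin n) (Fin n) ℂ}
    (hA : A.PosSemidef) (hB : B.PosSemidef)
    (hAB : (hB.sqrt * A * hB.sqrt).IsHermitian) (j : Fin n) :
    (⨅ i, hB.1.eigenvalues i) * eigDesc hA.1 j ≤ eigDesc hAB j := by
  set c := ⨅ i, hB.1.eigenvalues i
  set S := toEuclideanLin hB.sqrt
  have hS := hB.isHermitian_sqrt
  have : Nonempty (Fin n) := ⟨j⟩
  have hc : 0 ≤ c := le_ciInf hB.eigenvalues_nonneg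
  rcases hc.eq_or_lt with hc | hc
  · rw [← hc, zero_mul]
    have hAB' := hA.mul_mul_conjTranspose_same hB.sqrt
    rw [hS.eq] at hAB'
    exact hAB'.eigenvalues_nonneg _
  have hSx (x : EuclideanSpace ℂ (Fin n)) : c * ‖x‖ ^ 2 ≤ ‖S x‖ ^ 2 := by
    rw [hB.norm_sq_toEuclideanLin_sqrt]
    exact iInf_mul_norm_sq_le_re_inner_map_self hB.1.toEuclideanLin_eigenvectorBasis x
  have hSsurj : Function.Surjective S := LinearMap.injective_iff_surjective.1 <|
    (injective_iff_map_eq_zero S).2 fun x hx => by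
      simpa [hx, mul_nonpos_iff, hc.le, hc.not_ge] using hSx x
  obtain ⟨V, hVdim, hV⟩ := hA.1.exists_finrank_eq_eigDesc_mul_le j
  refine hAB.le_eigDesc_of_forall_mul_le j (V.comap S) ?_ fun x hx => ?_
  · have := Submodule.finrank_map_le S (V.comap S)
    rwa [Submodule.map_comap_eq_of_surjective hSsurj, hVdim] at this
  calc c * eigDesc hA.1 j * ‖x‖ ^ 2 = eigDesc hA.1 j * (c * ‖x‖ ^ 2) := by ring
    _ ≤ eigDesc hA.1 j * ‖S x‖ ^ 2 := by gcongr; exacts [hA.eigenvalues_nonneg _, hSx x]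
    _ ≤ RCLike.re ⟪S x, toEuclideanLin A (S x)⟫_ℂ := hV _ hx
    _ = RCLike.re ⟪x, toEuclideanLin (hB.sqrt * A * hB.sqrt) x⟫_ℂ := by
      rw [hS.inner_toEuclideanLin_mul_mul_self]
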